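/- arXiv:2505.14214 — 2 statements merged into one kernel-verified Lean document; each statement's English description precedes it below -/
import Mathlib

section
/- (Exponential moment bound.) Let ξ_1, …, ξ_n be independent random variables taking values in a separable Hilbert space 𝒳 such that E[ξ_i] = 0 for all i, Σ_{i=1}^n E[‖ξ_i‖²_𝒳] < B², Σ_{i=1}^n E[‖ξ_i‖^q_𝒳] < A for constants B² > 0, A > 0 and an integer q ≥ 3, and additionally ‖ξ_i‖_𝒳 ≤ L almost surely for some L > 0 and all 1 ≤ i ≤ n. Write S_n := Σ_{i=1}^n ξ_i. Then for all h > 0: E[ cosh( h·‖S_n‖_𝒳 ) ] ≤ exp( c̃_2·h²·B² + c̃_q·A·h^q·e^{hL} ), where the positive constants c̃_2 and c̃_q depend only on q. -/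
open MeasureTheory ProbabilityTheory Real Finset Set
open scoped ENNReal

/-!
Since `cosh` is a power series in `x ^ 2` with nonnegative coefficients, the parallelogram law
and the convexity of `t ↦ t ^ k` give `cosh ‖x + y‖ + cosh ‖x - y‖ ≤ 2 cosh ‖x‖ cosh ‖y‖`.
For `X` independent of a centred `Y`, Jensen's inequality in `Y` gives
`E cosh ‖X‖ ≤ E cosh ‖X - Y‖`, hence `E cosh ‖X + Y‖ ≤ E cosh ‖X‖ (2 E cosh ‖Y‖ - 1)`.
Iterating over the summands and bounding each factor with `cosh y ≤ 1 + 2 y² + y ^ q e^{hL}`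
(for `0 ≤ y ≤ hL`) and `1 + t ≤ eᵗ` gives the claim with `c̃₂ = 4` and `c̃_q = 2`.
-/

theorem ConvexOn.map_add_map_le_of_add_eq {s : Set ℝ} {f : ℝ → ℝ} (hf : ConvexOn ℝ s f)
    {m M x y : ℝ} (hm : m ∈ s) (hM : M ∈ s) (hmx : m ≤ x) (hxM : x ≤ M)
    (hxy : x + y = m + M) : f x + f y ≤ f m + f M := by
  rcases (hmx.trans hxM).eq_or_lt with hmM | hmM
  · obtain rfl : x = m := by linarith
    obtain rfl : y = M := by linarith
    rfl
  obtain rfl : y = m + M - x := by linarith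
  have hMm : M - m ≠ 0 := by linarith
  have ht : 0 ≤ (M - x) / (M - m) := div_nonneg (by linarith) (by linarith)
  have ht' : 0 ≤ (x - m) / (M - m) := div_nonneg (by linarith) (by linarith)
  have hsum : (M - x) / (M - m) + (x - m) / (M - m) = 1 := by field_simp; ring
  have hx : (M - x) / (M - m) * m + (x - m) / (M - m) * M = x := by field_simp; ring
  have hy : (x - m) / (M - m) * m + (M - x) / (M - m) * M = m + M - x := by field_simp; ring
  have h₁ := hf.2 hm hM ht ht' hsum
  have h₂ := hf.2 hm hM ht' ht (by linarith)
  simp only [smul_eq_mul, hx, hy] at h₁ h₂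
  linear_combination h₁ + h₂ + (f m + f M) * hsum

theorem cosh_add_cosh_le_of_sq_add_sq_eq {a b c d : ℝ} (ha : a ^ 2 ≤ d ^ 2) (hb : b ^ 2 ≤ d ^ 2)
    (h : a ^ 2 + b ^ 2 = c ^ 2 + d ^ 2) : cosh a + cosh b ≤ cosh c + cosh d := by
  refine hasSum_le (fun k => ?_) ((hasSum_cosh a).add (hasSum_cosh b))
    ((hasSum_cosh c).add (hasSum_cosh d))
  simp only [pow_mul, ← add_div]
  refine div_le_div_of_nonneg_right ?_ (by positivity)
  exact (convexOn_pow k).map_add_map_le_of_add_eq (sq_nonneg c) (sq_nonneg d)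
    (by linarith) ha h

theorem cosh_mul_norm_add_add_cosh_mul_norm_sub_le {E : Type*} [NormedAddCommGroup E]
    [InnerProductSpace ℝ E] (t : ℝ) (x y : E) :
    cosh (t * ‖x + y‖) + cosh (t * ‖x - y‖) ≤ 2 * cosh (t * ‖x‖) * cosh (t * ‖y‖) := by
  calc _ ≤ cosh (t * ‖x‖ - t * ‖y‖) + cosh (t * ‖x‖ + t * ‖y‖) := by
        apply cosh_add_cosh_le_of_sq_add_sq_eq
        · rw [← mul_add, mul_pow, mul_pow]; gcongr; exact norm_add_le x y
        · rw [← mul_add, mul_pow, mul_pow]; gcongr; exact norm_sub_le x y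
        · linear_combination t ^ 2 * parallelogram_law_with_norm ℝ x y
    _ = _ := by rw [cosh_sub, cosh_add]; ring

theorem convexOn_cosh : ConvexOn ℝ univ cosh := by
  refine convexOn_univ_of_deriv2_nonneg differentiable_cosh ?_ fun x => ?_
  · simp [differentiable_sinh]
  · simp [(cosh_pos x).le]

theorem convexOn_cosh_mul_norm {E : Type*} [NormedAddCommGroup E] [NormedSpace ℝ E] {h : ℝ}
    (hh : 0 ≤ h) : ConvexOn ℝ univ fun v : E => cosh (h * ‖v‖) := by
  refine ⟨convex_univ, fun y _ z _ a b ha hb hab => ?_⟩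
  calc cosh (h * ‖a • y + b • z‖) ≤ cosh (a * (h * ‖y‖) + b * (h * ‖z‖)) := by
        rw [cosh_le_cosh, abs_of_nonneg (by positivity), abs_of_nonneg (by positivity)]
        have := (convexOn_norm (E := E) convex_univ).2 (mem_univ y) (mem_univ z) ha hb hab
        simp only [smul_eq_mul] at this
        nlinarith
    _ ≤ a * cosh (h * ‖y‖) + b * cosh (h * ‖z‖) := convexOn_cosh.2 trivial trivial ha hb hab

theorem cosh_le_one_add_two_mul_sq_add_pow_mul_exp {y c : ℝ} (q : ℕ) (hy : 0 ≤ y)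
    (hyc : y ≤ c) : cosh y ≤ 1 + 2 * y ^ 2 + y ^ q * exp c := by
  have hrem : 0 ≤ y ^ q * exp c := by positivity
  rcases le_or_gt y 1 with hy1 | hy1
  · have hsq : |y ^ 2 / 2| ≤ 1 := by rw [abs_of_nonneg (by positivity)]; nlinarith
    have hexp := (abs_le.1 (abs_exp_sub_one_sub_id_le hsq)).2
    have hy4 : (y ^ 2 / 2) ^ 2 ≤ y ^ 2 := by
      nlinarith [mul_le_mul_of_nonneg_left (pow_le_one₀ hy hy1 : y ^ 2 ≤ 1) (sq_nonneg y)]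
    linarith [cosh_le_exp_half_sq y, sq_nonneg y]
  · calc cosh y ≤ exp y := by rw [cosh_eq]; linarith [exp_le_exp.2 (neg_le_self hy)]
      _ ≤ exp c := exp_le_exp.2 hyc
      _ ≤ y ^ q * exp c := le_mul_of_one_le_left (exp_pos c).le (one_le_pow₀ hy1.le)
      _ ≤ _ := by nlinarith

section Probability

variable {Ω E : Type*} {mΩ : MeasurableSpace Ω} {μ : Measure Ω} [NormedAddCommGroup E]

theorem integrable_cosh_mul_norm [IsFiniteMeasure μ] {Z : Ω → E}
    (hZ : AEStronglyMeasurable Z μ) {M : ℝ} (hM : ∀ᵐ ω ∂μ, ‖Z ω‖ ≤ M) (h : ℝ) :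
    Integrable (fun ω => cosh (h * ‖Z ω‖)) μ := by
  refine .of_bound (continuous_cosh.comp_aestronglyMeasurable (hZ.norm.const_mul h))
    (cosh (h * M)) ?_
  filter_upwards [hM] with ω hω
  rw [norm_of_nonneg (cosh_pos _).le, cosh_le_cosh, abs_mul, abs_mul, abs_norm]
  gcongr
  exact hω.trans (le_abs_self M)

theorem ae_norm_sum_le_card_mul {ι : Type*} {ξ : ι → Ω → E} {L : ℝ}
    (hL : ∀ i, ∀ᵐ ω ∂μ, ‖ξ i ω‖ ≤ L) (s : Finset ι) :
    ∀ᵐ ω ∂μ, ‖∑ i ∈ s, ξ i ω‖ ≤ #s * L := by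
  filter_upwards [(Filter.eventually_all_finset s).2 fun i _ => hL i] with ω hω
  exact (norm_sum_le_of_le s hω).trans_eq (by simp)

theorem one_le_integral_cosh [IsProbabilityMeasure μ] {f : Ω → ℝ}
    (hf : Integrable (fun ω => cosh (f ω)) μ) : 1 ≤ ∫ ω, cosh (f ω) ∂μ := by
  simpa using integral_mono (integrable_const 1) hf fun ω => one_le_cosh (f ω)

theorem sum_integral_norm_pow_le {ι : Type*} (s : Finset ι) {ξ : ι → Ω → E}
    (hξ : ∀ i, AEStronglyMeasurable (ξ i) μ) (r : ℕ) {C : ℝ}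
    (hC : ∑ i ∈ s, ∫⁻ ω, (‖ξ i ω‖₊ : ℝ≥0∞) ^ r ∂μ < ENNReal.ofReal C) :
    ∑ i ∈ s, ∫ ω, ‖ξ i ω‖ ^ r ∂μ ≤ C := by
  have hfin : ∀ i ∈ s, ∫⁻ ω, (‖ξ i ω‖₊ : ℝ≥0∞) ^ r ∂μ ≠ ∞ := fun i hi =>
    ne_top_of_le_ne_top (hC.trans ENNReal.ofReal_lt_top).ne
      (single_le_sum (f := fun i => ∫⁻ ω, (‖ξ i ω‖₊ : ℝ≥0∞) ^ r ∂μ) (fun j _ => zero_le) hi)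
  calc ∑ i ∈ s, ∫ ω, ‖ξ i ω‖ ^ r ∂μ = ∑ i ∈ s, (∫⁻ ω, (‖ξ i ω‖₊ : ℝ≥0∞) ^ r ∂μ).toReal :=
        sum_congr rfl fun i _ => by
          simpa [enorm_eq_nnnorm] using integral_norm_eq_lintegral_enorm ((hξ i).norm.pow r)
    _ = (∑ i ∈ s, ∫⁻ ω, (‖ξ i ω‖₊ : ℝ≥0∞) ^ r ∂μ).toReal := (ENNReal.toReal_sum hfin).symm
    _ ≤ C := (ENNReal.toReal_lt_of_lt_ofReal hC).le

theorem two_mul_integral_cosh_mul_norm_sub_one_le_exp [IsProbabilityMeasure μ] {Z : Ω → E}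
    (hZ : AEStronglyMeasurable Z μ) {L h : ℝ} (hZL : ∀ᵐ ω ∂μ, ‖Z ω‖ ≤ L) (hh : 0 ≤ h)
    (q : ℕ) :
    2 * ∫ ω, cosh (h * ‖Z ω‖) ∂μ - 1 ≤
      exp (4 * h ^ 2 * ∫ ω, ‖Z ω‖ ^ 2 ∂μ + 2 * h ^ q * exp (h * L) * ∫ ω, ‖Z ω‖ ^ q ∂μ) := by
  have hpow (r : ℕ) : Integrable (fun ω => ‖Z ω‖ ^ r) μ :=
    .of_bound (hZ.norm.pow r) (L ^ r) (by
      filter_upwards [hZL] with ω hω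
      rw [norm_pow, norm_norm]
      gcongr)
  have hmoment : ∫ ω, cosh (h * ‖Z ω‖) ∂μ ≤
      1 + 2 * h ^ 2 * ∫ ω, ‖Z ω‖ ^ 2 ∂μ + h ^ q * exp (h * L) * ∫ ω, ‖Z ω‖ ^ q ∂μ := by
    calc ∫ ω, cosh (h * ‖Z ω‖) ∂μ
        ≤ ∫ ω, (1 + 2 * h ^ 2 * ‖Z ω‖ ^ 2 + h ^ q * exp (h * L) * ‖Z ω‖ ^ q) ∂μ := by
          refine integral_mono_ae (integrable_cosh_mul_norm hZ hZL h) (by fun_prop) ?_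
          filter_upwards [hZL] with ω hω
          refine (cosh_le_one_add_two_mul_sq_add_pow_mul_exp q (by positivity)
            (mul_le_mul_of_nonneg_left hω hh)).trans_eq ?_
          ring
      _ = _ := by
          rw [integral_add (by fun_prop) (by fun_prop), integral_add (by fun_prop) (by fun_prop),
            integral_const_mul, integral_const_mul]
          simp
  linarith [add_one_le_exp (4 * h ^ 2 * ∫ ω, ‖Z ω‖ ^ 2 ∂μ +
    2 * h ^ q * exp (h * L) * ∫ ω, ‖Z ω‖ ^ q ∂μ)]

end Probability

section Independence

variable {Ω E : Type*} {mΩ : MeasurableSpace Ω} {μ : Measure Ω} [IsProbabilityMeasure μ]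
  [NormedAddCommGroup E] [NormedSpace ℝ E] [CompleteSpace E] [SecondCountableTopology E]
  [MeasurableSpace E] [BorelSpace E]

theorem ConvexOn.integral_comp_le_integral_comp_sub_of_indepFun {g : E → ℝ}
    (hg : ConvexOn ℝ univ g) (hgc : Continuous g) {X Y : Ω → E} (hX : AEMeasurable X μ)
    (hY : AEMeasurable Y μ) (hXY : IndepFun X Y μ) (hYint : Integrable Y μ)
    (hYmean : ∫ ω, Y ω ∂μ = 0) (hgX : Integrable (fun ω => g (X ω)) μ)
    (hgXY : Integrable (fun ω => g (X ω - Y ω)) μ) :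
    ∫ ω, g (X ω) ∂μ ≤ ∫ ω, g (X ω - Y ω) ∂μ := by
  have : IsProbabilityMeasure (μ.map X) := Measure.isProbabilityMeasure_map hX
  have : IsProbabilityMeasure (μ.map Y) := Measure.isProbabilityMeasure_map hY
  have hlaw : μ.map (fun ω => (X ω, Y ω)) = (μ.map X).prod (μ.map Y) :=
    (indepFun_iff_map_prod_eq_prod_map_map hX hY).1 hXY
  have hgsub : Continuous fun p : E × E => g (p.1 - p.2) := by fun_prop
  have hprod : Integrable (fun p : E × E => g (p.1 - p.2)) ((μ.map X).prod (μ.map Y)) := by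
    rwa [← hlaw, integrable_map_measure hgsub.aestronglyMeasurable (hX.prodMk hY)]
  have hYint' : Integrable (fun y => y) (μ.map Y) :=
    (integrable_map_measure aestronglyMeasurable_id hY).2 hYint
  have hYmean' : ∫ y, y ∂(μ.map Y) = 0 :=
    (integral_map hY aestronglyMeasurable_id).trans hYmean
  have hjensen : ∀ᵐ x ∂(μ.map X), g x ≤ ∫ y, g (x - y) ∂(μ.map Y) := by
    filter_upwards [hprod.prod_right_ae] with x hx
    have := hg.map_integral_le (f := fun y => x - y) hgc.continuousOn isClosed_univ
      (ae_of_all _ fun _ => mem_univ _) ((integrable_const x).sub hYint') hx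
    rwa [integral_sub (integrable_const x) hYint', integral_const, hYmean', probReal_univ,
      one_smul, sub_zero] at this
  calc ∫ ω, g (X ω) ∂μ = ∫ x, g x ∂(μ.map X) :=
        (integral_map hX hgc.aestronglyMeasurable).symm
    _ ≤ ∫ x, ∫ y, g (x - y) ∂(μ.map Y) ∂(μ.map X) :=
        integral_mono_ae ((integrable_map_measure hgc.aestronglyMeasurable hX).2 hgX)
          hprod.integral_prod_left hjensen
    _ = ∫ p : E × E, g (p.1 - p.2) ∂((μ.map X).prod (μ.map Y)) := (integral_prod _ hprod).symm
    _ = ∫ ω, g (X ω - Y ω) ∂μ := by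
        rw [← hlaw, integral_map (hX.prodMk hY) hgsub.aestronglyMeasurable]

end Independence

section HilbertSpace

variable {Ω E : Type*} {mΩ : MeasurableSpace Ω} {μ : Measure Ω} [IsProbabilityMeasure μ]
  [NormedAddCommGroup E] [InnerProductSpace ℝ E] [CompleteSpace E] [SecondCountableTopology E]
  [MeasurableSpace E] [BorelSpace E]

theorem integral_cosh_mul_norm_add_le {X Y : Ω → E} (hX : AEMeasurable X μ)
    (hY : AEMeasurable Y μ) (hXY : IndepFun X Y μ) (hYint : Integrable Y μ)
    (hYmean : ∫ ω, Y ω ∂μ = 0) {h K L : ℝ} (hh : 0 ≤ h) (hXK : ∀ᵐ ω ∂μ, ‖X ω‖ ≤ K)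
    (hYL : ∀ᵐ ω ∂μ, ‖Y ω‖ ≤ L) :
    ∫ ω, cosh (h * ‖X ω + Y ω‖) ∂μ ≤
      (∫ ω, cosh (h * ‖X ω‖) ∂μ) * (2 * ∫ ω, cosh (h * ‖Y ω‖) ∂μ - 1) := by
  have hφ : Continuous fun v : E => cosh (h * ‖v‖) := by fun_prop
  have hX' := hX.aestronglyMeasurable
  have hY' := hY.aestronglyMeasurable
  have hiX := integrable_cosh_mul_norm hX' hXK h
  have hiY := integrable_cosh_mul_norm hY' hYL h
  have hiXY : Integrable (fun ω => cosh (h * ‖X ω + Y ω‖)) μ :=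
    integrable_cosh_mul_norm (hX'.add hY') (M := K + L)
    (by filter_upwards [hXK, hYL] with ω hx hy using (norm_add_le _ _).trans (add_le_add hx hy)) h
  have hiXmY : Integrable (fun ω => cosh (h * ‖X ω - Y ω‖)) μ :=
    integrable_cosh_mul_norm (hX'.sub hY') (M := K + L)
    (by filter_upwards [hXK, hYL] with ω hx hy using (norm_sub_le _ _).trans (add_le_add hx hy)) h
  have hindep : IndepFun (fun ω => cosh (h * ‖X ω‖)) (fun ω => cosh (h * ‖Y ω‖)) μ :=
    hXY.comp hφ.measurable hφ.measurable
  have hiprod : Integrable (fun ω => cosh (h * ‖X ω‖) * cosh (h * ‖Y ω‖)) μ :=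
    hindep.integrable_mul hiX hiY
  calc ∫ ω, cosh (h * ‖X ω + Y ω‖) ∂μ
      ≤ ∫ ω, (2 * (cosh (h * ‖X ω‖) * cosh (h * ‖Y ω‖)) - cosh (h * ‖X ω - Y ω‖)) ∂μ :=
        integral_mono hiXY ((hiprod.const_mul 2).sub hiXmY) fun ω => by
          linarith [cosh_mul_norm_add_add_cosh_mul_norm_sub_le h (X ω) (Y ω)]
    _ = 2 * ((∫ ω, cosh (h * ‖X ω‖) ∂μ) * ∫ ω, cosh (h * ‖Y ω‖) ∂μ) -
          ∫ ω, cosh (h * ‖X ω - Y ω‖) ∂μ := by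
        rw [integral_sub (hiprod.const_mul 2) hiXmY, integral_const_mul,
          ← hindep.integral_mul_eq_mul_integral hiX.1 hiY.1]
        rfl
    _ ≤ 2 * ((∫ ω, cosh (h * ‖X ω‖) ∂μ) * ∫ ω, cosh (h * ‖Y ω‖) ∂μ) -
          ∫ ω, cosh (h * ‖X ω‖) ∂μ := by
        refine sub_le_sub_left ?_ _
        exact (convexOn_cosh_mul_norm hh).integral_comp_le_integral_comp_sub_of_indepFun hφ hX hY
          hXY hYint hYmean hiX hiXmY
    _ = _ := by ring

theorem integral_cosh_mul_norm_sum_le_prod {ι : Type*} {ξ : ι → Ω → E}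
    (hξ : ∀ i, AEMeasurable (ξ i) μ) (hindep : iIndepFun ξ μ) (hint : ∀ i, Integrable (ξ i) μ)
    (hmean : ∀ i, ∫ ω, ξ i ω ∂μ = 0) {h L : ℝ} (hh : 0 ≤ h)
    (hL : ∀ i, ∀ᵐ ω ∂μ, ‖ξ i ω‖ ≤ L) (s : Finset ι) :
    ∫ ω, cosh (h * ‖∑ i ∈ s, ξ i ω‖) ∂μ ≤ ∏ i ∈ s, (2 * ∫ ω, cosh (h * ‖ξ i ω‖) ∂μ - 1) := by
  classical
  induction s using Finset.induction_on with
  | empty => simp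
  | insert i s hi ih =>
    have hindep_i : IndepFun (fun ω => ∑ j ∈ s, ξ j ω) (ξ i) μ := by
      simpa [Finset.sum_fn] using hindep.indepFun_finsetSum_of_notMem₀ hξ hi
    have hfactor : 0 ≤ 2 * ∫ ω, cosh (h * ‖ξ i ω‖) ∂μ - 1 := by
      linarith [one_le_integral_cosh
        (integrable_cosh_mul_norm (hξ i).aestronglyMeasurable (hL i) h)]
    simp_rw [sum_insert hi, prod_insert hi, add_comm (ξ i _)]
    calc _ ≤ (∫ ω, cosh (h * ‖∑ j ∈ s, ξ j ω‖) ∂μ) * (2 * ∫ ω, cosh (h * ‖ξ i ω‖) ∂μ - 1) :=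
          integral_cosh_mul_norm_add_le (s.aemeasurable_fun_sum fun j _ => hξ j) (hξ i) hindep_i
            (hint i) (hmean i) hh (ae_norm_sum_le_card_mul hL s) (hL i)
      _ ≤ _ := by rw [mul_comm]; gcongr

end HilbertSpace

theorem exponential_moment_bound_general (q : ℕ) :
    ∃ ctilde₂ ctildeq : ℝ, 0 < ctilde₂ ∧ 0 < ctildeq ∧
      ∀ (𝒳 : Type) [NormedAddCommGroup 𝒳] [InnerProductSpace ℝ 𝒳] [CompleteSpace 𝒳]
        [TopologicalSpace.SeparableSpace 𝒳] [MeasurableSpace 𝒳] [BorelSpace 𝒳]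
        (Ω : Type) [MeasureSpace Ω] [IsProbabilityMeasure (ℙ : Measure Ω)]
        (n : ℕ) (ξ : Fin n → Ω → 𝒳)
        (_hmeas : ∀ i, Measurable (ξ i))
        (_hindep : iIndepFun ξ ℙ)
        (_hint : ∀ i, Integrable (ξ i) ℙ) (_hmean : ∀ i, ∫ ω, ξ i ω ∂ℙ = 0)
        (B A L : ℝ) (_hB : 0 < B) (_hA : 0 < A) (_hL : 0 < L)
        (_h2 : ∑ i, ∫⁻ ω, (‖ξ i ω‖₊ : ENNReal) ^ 2 ∂ℙ < ENNReal.ofReal (B ^ 2))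
        (_hqmom : ∑ i, ∫⁻ ω, (‖ξ i ω‖₊ : ENNReal) ^ q ∂ℙ < ENNReal.ofReal A)
        (_hbdd : ∀ i, ∀ᵐ ω ∂ℙ, ‖ξ i ω‖ ≤ L)
        (h : ℝ), 0 < h →
        ∫⁻ ω, ENNReal.ofReal (Real.cosh (h * ‖∑ i, ξ i ω‖)) ∂ℙ ≤
          ENNReal.ofReal
            (Real.exp (ctilde₂ * h ^ 2 * B ^ 2 + ctildeq * A * h ^ q * Real.exp (h * L))) := by
  refine ⟨4, 2, by norm_num, by norm_num, ?_⟩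
  intro 𝒳 _ _ _ _ _ _ Ω _ _ n ξ _ hindep hint hmean B A L _ _ _ h2 hqmom hbdd h hh
  have : SecondCountableTopology 𝒳 := UniformSpace.secondCountable_of_separable 𝒳
  have hξ i := (hint i).aestronglyMeasurable
  have hm2 := sum_integral_norm_pow_le univ hξ 2 h2
  have hmq := sum_integral_norm_pow_le univ hξ q hqmom
  rw [← ofReal_integral_eq_lintegral_ofReal
    (integrable_cosh_mul_norm (by fun_prop) (ae_norm_sum_le_card_mul hbdd univ) h)
    (ae_of_all _ fun ω => (cosh_pos _).le)]
  refine ENNReal.ofReal_le_ofReal ?_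
  calc ∫ ω, cosh (h * ‖∑ i, ξ i ω‖) ∂ℙ
      ≤ ∏ i, (2 * ∫ ω, cosh (h * ‖ξ i ω‖) ∂ℙ - 1) :=
        integral_cosh_mul_norm_sum_le_prod (fun i => (hint i).aemeasurable) hindep hint hmean
          hh.le hbdd univ
    _ ≤ ∏ i, exp (4 * h ^ 2 * ∫ ω, ‖ξ i ω‖ ^ 2 ∂ℙ +
          2 * h ^ q * exp (h * L) * ∫ ω, ‖ξ i ω‖ ^ q ∂ℙ) :=
        prod_le_prod (fun i _ => by
            linarith [one_le_integral_cosh (integrable_cosh_mul_norm (hξ i) (hbdd i) h)])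
          fun i _ => two_mul_integral_cosh_mul_norm_sub_one_le_exp (hξ i) (hbdd i) hh.le q
    _ = exp (4 * h ^ 2 * ∑ i, ∫ ω, ‖ξ i ω‖ ^ 2 ∂ℙ +
          2 * h ^ q * exp (h * L) * ∑ i, ∫ ω, ‖ξ i ω‖ ^ q ∂ℙ) := by
        rw [← exp_sum, sum_add_distrib, mul_sum, mul_sum]
    _ ≤ exp (4 * h ^ 2 * B ^ 2 + 2 * A * h ^ q * exp (h * L)) := by
        rw [mul_right_comm 2 A, mul_right_comm (2 * h ^ q) A]
        gcongr

/-- exponential moment bound: for every integer `q ≥ 3` there exist constants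
`c̃₂, c̃_q > 0` depending only on `q` such that for all independent random variables
`ξ₁,…,ξₙ` with values in a separable real Hilbert space `𝒳` satisfying `E[ξᵢ] = 0`,
`Σᵢ E[‖ξᵢ‖²] < B²`, `Σᵢ E[‖ξᵢ‖^q] < A` and `‖ξᵢ‖ ≤ L` a.s. (`L > 0`), writing
`Sₙ = Σᵢ ξᵢ`, for all `h > 0`:
`E[cosh(h·‖Sₙ‖)] ≤ exp(c̃₂·h²·B² + c̃_q·A·h^q·e^{hL})`. -/
theorem exponential_moment_bound (q : ℕ) (hq : 3 ≤ q) :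
    ∃ ctilde₂ ctildeq : ℝ, 0 < ctilde₂ ∧ 0 < ctildeq ∧
      ∀ (𝒳 : Type) [NormedAddCommGroup 𝒳] [InnerProductSpace ℝ 𝒳] [CompleteSpace 𝒳]
        [TopologicalSpace.SeparableSpace 𝒳] [MeasurableSpace 𝒳] [BorelSpace 𝒳]
        (Ω : Type) [MeasureSpace Ω] [IsProbabilityMeasure (ℙ : Measure Ω)]
        (n : ℕ) (ξ : Fin n → Ω → 𝒳)
        (_hmeas : ∀ i, Measurable (ξ i))
        (_hindep : iIndepFun ξ ℙ)
        (_hint : ∀ i, Integrable (ξ i) ℙ) (_hmean : ∀ i, ∫ ω, ξ i ω ∂ℙ = 0)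
        (B A L : ℝ) (_hB : 0 < B) (_hA : 0 < A) (_hL : 0 < L)
        (_h2 : ∑ i, ∫⁻ ω, (‖ξ i ω‖₊ : ENNReal) ^ 2 ∂ℙ < ENNReal.ofReal (B ^ 2))
        (_hqmom : ∑ i, ∫⁻ ω, (‖ξ i ω‖₊ : ENNReal) ^ q ∂ℙ < ENNReal.ofReal A)
        (_hbdd : ∀ i, ∀ᵐ ω ∂ℙ, ‖ξ i ω‖ ≤ L)
        (h : ℝ), 0 < h →
        ∫⁻ ω, ENNReal.ofReal (Real.cosh (h * ‖∑ i, ξ i ω‖)) ∂ℙ ≤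
          ENNReal.ofReal
            (Real.exp (ctilde₂ * h ^ 2 * B ^ 2 + ctildeq * A * h ^ q * Real.exp (h * L))) :=
  exponential_moment_bound_general q
end

section
/- (Regularized residual bound.) Let the kernel boundedness assumption and (SRC) with ν ≥ 1/2 hold. Then for every α > 0: ‖ (C_π + α·Id)^{-1/2}·( I_π* f_star − C_π f_α ) ‖_H ≤ R·max{1, κ^{2(ν−1)}}·α^{min{ν,1}}, where f_α = (C_π + α·Id)^{-1} I_π* f_star. -/
/-!
The residual equals `α (C + α)⁻¹ I* f⋆`, so its weighted norm is `α ‖(C + α)^{-3/2} I* f⋆‖`.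
Pushing the resolvent through `I` (`(C + α)⁻¹ I* = I* (T + α)⁻¹`) moves the whole quantity to
`L²`, where it becomes a quadratic form in the commuting operators `T`, `E = (T + α)⁻¹` and the
powers `T ^ t`; the only spectral input is `‖T E‖ ≤ 1` and `α ‖E‖ ≤ 1`.
For `ν ≥ 1` this gives the bound after splitting off `T ^ (ν - 1)`. For `ν ≤ 1` the fractional
power is reached by log-convexity of `t ↦ ⟪x, T ^ t x⟫` (Cauchy–Schwarz at midpoints): a
midpoint log-convex, bounded function on `[0, 1]` is bounded by its values at the endpoints,
and at the endpoints only integer powers of `T` occur.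
-/

open Set MeasureTheory
open scoped Ring RealInnerProductSpace

theorem le_of_sq_midpoint_le_mul {f : ℝ → ℝ} {M : ℝ} (hf : ∀ t ∈ Icc (0 : ℝ) 1, 0 ≤ f t)
    (hbdd : BddAbove (f '' Icc 0 1))
    (hmid : ∀ a ∈ Icc (0 : ℝ) 1, ∀ b ∈ Icc (0 : ℝ) 1, f ((a + b) / 2) ^ 2 ≤ f a * f b)
    (h0 : f 0 ≤ M) (h1 : f 1 ≤ M) {θ : ℝ} (hθ : θ ∈ Icc (0 : ℝ) 1) : f θ ≤ M := by
  set S := sSup (f '' Icc 0 1)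
  have hS : ∀ t ∈ Icc (0 : ℝ) 1, f t ≤ S := fun t ht => le_csSup hbdd (mem_image_of_mem f ht)
  have hM : 0 ≤ M := (hf 0 (left_mem_Icc.2 zero_le_one)).trans h0
  -- every point of `[0, 1]` is the midpoint of an endpoint and another point of `[0, 1]`
  have hsq : ∀ t ∈ Icc (0 : ℝ) 1, f t ^ 2 ≤ M * S := by
    rintro t ⟨ht0, ht1⟩
    rcases le_total t (1 / 2) with ht | ht
    · have := hmid 0 (left_mem_Icc.2 zero_le_one) (2 * t) ⟨by linarith, by linarith⟩
      rw [show (0 + 2 * t) / 2 = t by ring] at this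
      exact this.trans (mul_le_mul h0 (hS _ ⟨by linarith, by linarith⟩)
        (hf _ ⟨by linarith, by linarith⟩) hM)
    · have := hmid 1 (right_mem_Icc.2 zero_le_one) (2 * t - 1) ⟨by linarith, by linarith⟩
      rw [show (1 + (2 * t - 1)) / 2 = t by ring] at this
      exact this.trans (mul_le_mul h1 (hS _ ⟨by linarith, by linarith⟩)
        (hf _ ⟨by linarith, by linarith⟩) hM)
  -- `f t ≤ √(M S) ≤ (M + S) / 2`
  have hSM : S ≤ (M + S) / 2 := by
    refine csSup_le ((nonempty_Icc.2 zero_le_one).image f) ?_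
    rintro _ ⟨t, ht, rfl⟩
    nlinarith [hsq t ht, hf t ht, hS 0 (left_mem_Icc.2 zero_le_one),
      hf 0 (left_mem_Icc.2 zero_le_one), sq_nonneg (M - S)]
  linarith [hS θ hθ]

theorem add_sq_le_add_mul_add {u v u₁ u₂ v₁ v₂ : ℝ} (hu : 0 ≤ u) (hv : 0 ≤ v)
    (hu₁ : 0 ≤ u₁) (hu₂ : 0 ≤ u₂) (hv₁ : 0 ≤ v₁) (hv₂ : 0 ≤ v₂)
    (hu' : u ^ 2 ≤ u₁ * u₂) (hv' : v ^ 2 ≤ v₁ * v₂) :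
    (u + v) ^ 2 ≤ (u₁ + v₁) * (u₂ + v₂) := by
  have hcross : 2 * (u * v) ≤ u₁ * v₂ + v₁ * u₂ := by
    have : (2 * (u * v)) ^ 2 ≤ (u₁ * v₂ + v₁ * u₂) ^ 2 := by
      nlinarith [mul_le_mul hu' hv' (sq_nonneg v) (mul_nonneg hu₁ hu₂),
        sq_nonneg (u₁ * v₂ - v₁ * u₂)]
    exact (pow_le_pow_iff_left₀ (by positivity) (by positivity) two_ne_zero).1 this
  nlinarith

theorem Commute.ringInverse_right {M₀ : Type*} [MonoidWithZero M₀] {a b : M₀}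
    (h : Commute a b) : Commute a b⁻¹ʳ := by
  by_cases hb : IsUnit b
  · rw [Ring.inverse_of_isUnit hb]
    exact Commute.units_inv_right (a := a) (u := hb.unit) h
  · rw [Ring.inverse_non_unit b hb]
    exact Commute.zero_right a

section SelfAdjointInverse

variable {R : Type*} [MonoidWithZero R] [StarMul R] {x y : R}

theorem IsSelfAdjoint.mul_eq_one_comm (hx : IsSelfAdjoint x) (hy : IsSelfAdjoint y)
    (h : y * x = 1) : x * y = 1 := by
  simpa [star_mul, hx.star_eq, hy.star_eq] using congrArg star h

theorem IsSelfAdjoint.isUnit_of_mul_eq_one (hx : IsSelfAdjoint x) (hy : IsSelfAdjoint y)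
    (h : y * x = 1) : IsUnit x :=
  ⟨⟨x, y, hx.mul_eq_one_comm hy h, h⟩, rfl⟩

theorem IsSelfAdjoint.ringInverse_eq_of_mul_eq_one (hx : IsSelfAdjoint x) (hy : IsSelfAdjoint y)
    (h : y * x = 1) : x⁻¹ʳ = y :=
  Ring.inverse_unit ⟨x, y, hx.mul_eq_one_comm hy h, h⟩

end SelfAdjointInverse

namespace ContinuousLinearMap

section PushThrough

variable {𝕜 E F : Type*} [NontriviallyNormedField 𝕜] [NormedAddCommGroup E] [NormedSpace 𝕜 E]
  [NormedAddCommGroup F] [NormedSpace 𝕜 F] {A : E →L[𝕜] F} {B : F →L[𝕜] E} {α : 𝕜}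

theorem apply_ringInverse_add_smul_one {T : E →L[𝕜] E}
    (h : IsUnit (T + α • 1)) (x : E) : T ((T + α • 1)⁻¹ʳ x) + α • (T + α • 1)⁻¹ʳ x = x := by
  simpa using congr($(Ring.mul_inverse_cancel _ h) x)

theorem ringInverse_add_smul_one_apply {T : E →L[𝕜] E}
    (h : IsUnit (T + α • 1)) (x : E) : (T + α • 1)⁻¹ʳ (T x) + α • (T + α • 1)⁻¹ʳ x = x := by
  simpa using congr($(Ring.inverse_mul_cancel _ h) x)

theorem sub_apply_ringInverse_add_smul_one {T : E →L[𝕜] E}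
    (h : IsUnit (T + α • 1)) (x : E) : x - T ((T + α • 1)⁻¹ʳ x) = α • (T + α • 1)⁻¹ʳ x := by
  rw [sub_eq_iff_eq_add', apply_ringInverse_add_smul_one h]

/-- The inverse is `α⁻¹ (1 - A (BA + α)⁻¹ B)`. -/
theorem isUnit_comp_add_smul_one_swap (hα : α ≠ 0)
    (h : IsUnit (B ∘L A + α • 1)) : IsUnit (A ∘L B + α • 1) := by
  set D := (B ∘L A + α • 1)⁻¹ʳ
  refine ⟨⟨A ∘L B + α • 1, α⁻¹ • (1 - A ∘L D ∘L B), ?_, ?_⟩, rfl⟩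
  · ext y
    have hD := congr(A $(apply_ringInverse_add_smul_one h (B y)))
    simp only [comp_apply, map_add, map_smul] at hD
    simp only [mul_apply_eq_comp, smul_apply, sub_apply, one_apply_eq_self, comp_apply,
      add_apply, map_sub, map_smul]
    linear_combination (norm := match_scalars <;> field_simp <;> ring) (-α⁻¹) • hD
  · ext y
    have hD := congr(A $(ringInverse_add_smul_one_apply h (B y)))
    simp only [comp_apply, map_add, map_smul] at hD
    simp only [mul_apply_eq_comp, smul_apply, sub_apply, one_apply_eq_self, comp_apply,
      add_apply, map_add, map_smul]
    linear_combination (norm := match_scalars <;> field_simp <;> ring) (-α⁻¹) • hD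

theorem comp_ringInverse_add_smul_one (hBA : IsUnit (B ∘L A + α • 1))
    (hAB : IsUnit (A ∘L B + α • 1)) :
    B ∘L (A ∘L B + α • 1)⁻¹ʳ = (B ∘L A + α • 1)⁻¹ʳ ∘L B := by
  ext y
  have hE := congr(B $(apply_ringInverse_add_smul_one hAB y))
  simp only [comp_apply, map_add, map_smul] at hE
  rw [comp_apply, comp_apply, ← hE, map_add, map_smul]
  exact (ringInverse_add_smul_one_apply hBA _).symm

end PushThrough

variable {H K : Type*} [NormedAddCommGroup H] [InnerProductSpace ℝ H]
  [NormedAddCommGroup K] [InnerProductSpace ℝ K] {α : ℝ}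

theorem norm_apply_ringInverse_sq_add_sq_le {T : K →L[ℝ] K} (hT : ∀ x, 0 ≤ ⟪x, T x⟫)
    (hα : 0 ≤ α) (h : IsUnit (T + α • 1)) (x : K) :
    ‖T ((T + α • 1)⁻¹ʳ x)‖ ^ 2 + (α * ‖(T + α • 1)⁻¹ʳ x‖) ^ 2 ≤ ‖x‖ ^ 2 := by
  set y := (T + α • 1)⁻¹ʳ x
  rw [← apply_ringInverse_add_smul_one h x, norm_add_sq_real, real_inner_smul_right,
    norm_smul, Real.norm_of_nonneg hα, real_inner_comm]
  nlinarith [mul_nonneg hα (hT y)]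

theorem norm_apply_ringInverse_le {T : K →L[ℝ] K} (hT : ∀ x, 0 ≤ ⟪x, T x⟫)
    (hα : 0 ≤ α) (h : IsUnit (T + α • 1)) (x : K) : ‖T ((T + α • 1)⁻¹ʳ x)‖ ≤ ‖x‖ := by
  have := norm_apply_ringInverse_sq_add_sq_le hT hα h x
  exact (pow_le_pow_iff_left₀ (norm_nonneg _) (norm_nonneg _) two_ne_zero).1 (by nlinarith)

theorem mul_norm_ringInverse_le {T : K →L[ℝ] K} (hT : ∀ x, 0 ≤ ⟪x, T x⟫)
    (hα : 0 ≤ α) (h : IsUnit (T + α • 1)) (x : K) : α * ‖(T + α • 1)⁻¹ʳ x‖ ≤ ‖x‖ := by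
  have := norm_apply_ringInverse_sq_add_sq_le hT hα h x
  exact (pow_le_pow_iff_left₀ (by positivity) (norm_nonneg _) two_ne_zero).1 (by nlinarith)

theorem norm_sq_apply_ringInverse_adjoint [CompleteSpace H] [CompleteSpace K]
    {A : H →L[ℝ] K} {S : H →L[ℝ] H}
    (hS : IsSelfAdjoint S) (hBA : IsUnit (adjoint A ∘L A + α • 1))
    (hAB : IsUnit (A ∘L adjoint A + α • 1)) (hD : (adjoint A ∘L A + α • 1)⁻¹ʳ = S * S)
    (f : K) :
    ‖S ((adjoint A ∘L A + α • 1)⁻¹ʳ (adjoint A f))‖ ^ 2 =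
      ⟪(A ∘L adjoint A + α • 1)⁻¹ʳ f,
        (A ∘L adjoint A) ((A ∘L adjoint A + α • 1)⁻¹ʳ ((A ∘L adjoint A + α • 1)⁻¹ʳ f))⟫ := by
  set D := (adjoint A ∘L A + α • 1)⁻¹ʳ
  set E := (A ∘L adjoint A + α • 1)⁻¹ʳ
  have hpush : ∀ y, D (adjoint A y) = adjoint A (E y) := fun y =>
    congr($(comp_ringInverse_add_smul_one hBA hAB) y).symm
  have hSS : ∀ u, ⟪S u, S u⟫ = ⟪u, (S * S) u⟫ := fun u => hS.isSymmetric u (S u)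
  rw [← real_inner_self_eq_norm_sq, hSS, ← hD, hpush, hpush, adjoint_inner_left, comp_apply]

end ContinuousLinearMap

section Semigroup

variable {K : Type*} [NormedAddCommGroup K] [InnerProductSpace ℝ K] [CompleteSpace K]

/-- Models `t ↦ T ^ t` for a positive selfadjoint `T` with `‖T‖ ≤ b`. Only positive exponents
are constrained: `P 0` need not be `1`. -/
structure IsSelfAdjointSemigroup (P : ℝ → K →L[ℝ] K) (b : ℝ) : Prop where
  add : ∀ s t, 0 < s → 0 < t → P (s + t) = (P s).comp (P t)
  isSelfAdjoint : ∀ t, 0 < t → IsSelfAdjoint (P t)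
  norm_le : ∀ t, 0 < t → ‖P t‖ ≤ b ^ t

/-- `α ^ (1 - t) ⟪x, P (s + t) (P 1 + α) x⟫`, expanded into its two summands. -/
noncomputable def weightedMoment (P : ℝ → K →L[ℝ] K) (α s : ℝ) (x : K) (t : ℝ) : ℝ :=
  α ^ (1 - t) * (⟪x, P (s + 1 + t) x⟫ + α * ⟪x, P (s + t) x⟫)

namespace IsSelfAdjointSemigroup

variable {P : ℝ → K →L[ℝ] K} {b s t α : ℝ}

local notation "𝓡" => (P 1 + α • 1)⁻¹ʳ

theorem apply_add (hP : IsSelfAdjointSemigroup P b) (hs : 0 < s) (ht : 0 < t) (x : K) :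
    P (s + t) x = P s (P t x) := by
  rw [hP.add s t hs ht]; rfl

theorem inner_apply_add (hP : IsSelfAdjointSemigroup P b) (hs : 0 < s) (ht : 0 < t)
    (x y : K) : ⟪x, P (s + t) y⟫ = ⟪P s x, P t y⟫ := by
  rw [hP.apply_add hs ht]
  exact ((hP.isSelfAdjoint s hs).isSymmetric x _).symm

theorem inner_apply_self (hP : IsSelfAdjointSemigroup P b) (ht : 0 < t) (x : K) :
    ⟪x, P t x⟫ = ‖P (t / 2) x‖ ^ 2 := by
  rw [← real_inner_self_eq_norm_sq, ← hP.inner_apply_add (half_pos ht) (half_pos ht), add_halves]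

theorem inner_apply_self_nonneg (hP : IsSelfAdjointSemigroup P b) (ht : 0 < t) (x : K) :
    0 ≤ ⟪x, P t x⟫ :=
  hP.inner_apply_self ht x ▸ sq_nonneg _

theorem inner_apply_self_le (hP : IsSelfAdjointSemigroup P b) (ht : 0 < t) (x : K) :
    ⟪x, P t x⟫ ≤ b ^ t * ‖x‖ ^ 2 :=
  calc ⟪x, P t x⟫ ≤ ‖x‖ * (b ^ t * ‖x‖) :=
        (real_inner_le_norm _ _).trans
          (mul_le_mul_of_nonneg_left ((P t).le_of_opNorm_le (hP.norm_le t ht) x) (norm_nonneg _))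
    _ = b ^ t * ‖x‖ ^ 2 := by ring

theorem sq_inner_apply_midpoint_le (hP : IsSelfAdjointSemigroup P b) (hs : 0 < s) (ht : 0 < t)
    (x : K) : ⟪x, P ((s + t) / 2) x⟫ ^ 2 ≤ ⟪x, P s x⟫ * ⟪x, P t x⟫ := by
  rw [add_div, hP.inner_apply_add (half_pos hs) (half_pos ht), hP.inner_apply_self hs,
    hP.inner_apply_self ht, ← mul_pow]
  exact sq_le_sq.2 ((abs_real_inner_le_norm _ _).trans (le_abs_self _))

theorem inner_apply_apply_add_smul (hP : IsSelfAdjointSemigroup P b) (hs : 0 < s) (ht : 0 < t)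
    (α : ℝ) (x : K) :
    ⟪P s x, P t (P 1 x + α • x)⟫ = ⟪x, P (s + t + 1) x⟫ + α * ⟪x, P (s + t) x⟫ := by
  rw [map_add, map_smul, inner_add_right, real_inner_smul_right, ← hP.apply_add ht one_pos,
    ← hP.inner_apply_add hs (by positivity), ← hP.inner_apply_add hs ht, add_assoc s t 1]

theorem commute (hP : IsSelfAdjointSemigroup P b) (hs : 0 < s) (ht : 0 < t) :
    Commute (P s) (P t) := by
  rw [Commute, SemiconjBy, ContinuousLinearMap.mul_def, ContinuousLinearMap.mul_def,
    ← hP.add s t hs ht, ← hP.add t s ht hs, add_comm]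

theorem ringInverse_apply_apply (hP : IsSelfAdjointSemigroup P b) (hs : 0 < s) (y : K) :
    𝓡 (P s y) = P s (𝓡 y) :=
  have hcomm : Commute (P s) 𝓡 :=
    ((hP.commute hs one_pos).add_right ((Commute.one_right _).smul_right α)).ringInverse_right
  congr($hcomm.eq.symm y)

theorem weightedMoment_nonneg (hP : IsSelfAdjointSemigroup P b) (hα : 0 ≤ α) (hs : 0 < s)
    (x : K) (ht : 0 ≤ t) : 0 ≤ weightedMoment P α s x t :=
  mul_nonneg (Real.rpow_nonneg hα _) (add_nonneg (hP.inner_apply_self_nonneg (by linarith) x)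
    (mul_nonneg hα (hP.inner_apply_self_nonneg (by linarith) x)))

theorem bddAbove_weightedMoment (hP : IsSelfAdjointSemigroup P b) (hb : 0 < b) (hα : 0 < α)
    (hs : 0 < s) (x : K) : BddAbove (weightedMoment P α s x '' Icc 0 1) := by
  obtain ⟨C, hC⟩ := isCompact_Icc.bddAbove_image (f := fun t =>
      α ^ (1 - t) * (b ^ (s + 1 + t) * ‖x‖ ^ 2 + α * (b ^ (s + t) * ‖x‖ ^ 2)))
    (Continuous.continuousOn (by fun_prop (disch := positivity)))
  refine ⟨C, ?_⟩
  rintro _ ⟨t, ht, rfl⟩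
  refine le_trans ?_ (hC ⟨t, ht, rfl⟩)
  dsimp only [weightedMoment]
  gcongr
  · exact hP.inner_apply_self_le (by linarith [ht.1]) x
  · exact hP.inner_apply_self_le (by linarith [ht.1]) x

theorem sq_weightedMoment_midpoint_le (hP : IsSelfAdjointSemigroup P b) (hα : 0 < α)
    (hs : 0 < s) (x : K) {a c : ℝ} (ha : 0 ≤ a) (hc : 0 ≤ c) :
    weightedMoment P α s x ((a + c) / 2) ^ 2 ≤
      weightedMoment P α s x a * weightedMoment P α s x c := by
  have hu := hP.sq_inner_apply_midpoint_le (s := s + 1 + a) (t := s + 1 + c)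
    (by linarith) (by linarith) x
  have hv := hP.sq_inner_apply_midpoint_le (s := s + a) (t := s + c) (by linarith) (by linarith) x
  rw [show (s + 1 + a + (s + 1 + c)) / 2 = s + 1 + (a + c) / 2 by ring] at hu
  rw [show (s + a + (s + c)) / 2 = s + (a + c) / 2 by ring] at hv
  have hαm : (α ^ (1 - (a + c) / 2)) ^ 2 = α ^ (1 - a) * α ^ (1 - c) := by
    rw [← Real.rpow_mul_natCast hα.le, ← Real.rpow_add hα]
    congr 1
    push_cast
    ring
  have hF : ∀ r, 0 ≤ r → 0 ≤ ⟪x, P (s + r) x⟫ := fun r hr =>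
    hP.inner_apply_self_nonneg (by linarith) x
  have hF₁ : ∀ r, 0 ≤ r → 0 ≤ ⟪x, P (s + 1 + r) x⟫ := fun r hr =>
    hP.inner_apply_self_nonneg (by linarith) x
  have hsum := add_sq_le_add_mul_add (hF₁ ((a + c) / 2) (by positivity))
    (mul_nonneg hα.le (hF ((a + c) / 2) (by positivity))) (hF₁ a ha) (hF₁ c hc)
    (mul_nonneg hα.le (hF a ha)) (mul_nonneg hα.le (hF c hc)) hu
    (by rw [mul_pow]; nlinarith [sq_nonneg α])
  simp only [weightedMoment]
  calc _ = (α ^ (1 - (a + c) / 2)) ^ 2 *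
        (⟪x, P (s + 1 + (a + c) / 2) x⟫ + α * ⟪x, P (s + (a + c) / 2) x⟫) ^ 2 := mul_pow _ _ _
    _ ≤ (α ^ (1 - a) * α ^ (1 - c)) * ((⟪x, P (s + 1 + a) x⟫ + α * ⟪x, P (s + a) x⟫) *
        (⟪x, P (s + 1 + c) x⟫ + α * ⟪x, P (s + c) x⟫)) := by rw [hαm]; gcongr
    _ = _ := by ring

theorem weightedMoment_le (hP : IsSelfAdjointSemigroup P b) (hb : 0 < b) (hα : 0 < α)
    (hs : 0 < s) (x : K) {M : ℝ} (h0 : weightedMoment P α s x 0 ≤ M)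
    (h1 : weightedMoment P α s x 1 ≤ M) {θ : ℝ} (hθ : θ ∈ Icc (0 : ℝ) 1) :
    weightedMoment P α s x θ ≤ M :=
  le_of_sq_midpoint_le_mul (fun _ ht => hP.weightedMoment_nonneg hα.le hs x ht.1)
    (hP.bddAbove_weightedMoment hb hα hs x)
    (fun _ ha _ hc => hP.sq_weightedMoment_midpoint_le hα hs x ha.1 hc.1) h0 h1 hθ

theorem norm_apply_ringInverse_le_rpow (hP : IsSelfAdjointSemigroup P b) (hα : 0 ≤ α)
    (hu : IsUnit (P 1 + α • 1)) {ν : ℝ} (hν : 1 ≤ ν) (x : K) :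
    ‖P ν (𝓡 x)‖ ≤ b ^ (ν - 1) * ‖x‖ := by
  have hT := ContinuousLinearMap.norm_apply_ringInverse_le
    (fun y => hP.inner_apply_self_nonneg one_pos y) hα hu x
  rcases hν.eq_or_lt with rfl | hν
  · simpa using hT
  have hν' : 0 < ν - 1 := sub_pos.2 hν
  have hsplit : P ν = (P (ν - 1)).comp (P 1) := by rw [← hP.add _ _ hν' one_pos, sub_add_cancel]
  rw [hsplit, ContinuousLinearMap.comp_apply]
  calc _ ≤ b ^ (ν - 1) * ‖P 1 (𝓡 x)‖ := (P _).le_of_opNorm_le (hP.norm_le _ hν') _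
    _ ≤ b ^ (ν - 1) * ‖x‖ :=
        mul_le_mul_of_nonneg_left hT ((norm_nonneg _).trans (hP.norm_le _ hν'))

theorem inner_ringInverse_le_of_one_le (hP : IsSelfAdjointSemigroup P b) (hα : 0 ≤ α)
    (hu : IsUnit (P 1 + α • 1)) {ν : ℝ} (hν : 1 ≤ ν) (g : K) :
    ⟪P ν (𝓡 g), P 1 (𝓡 (P ν (𝓡 g)))⟫ ≤ (b ^ (ν - 1) * ‖g‖) ^ 2 := by
  set v := P ν (𝓡 g)
  calc _ ≤ ‖v‖ * ‖v‖ := (real_inner_le_norm _ _).trans (mul_le_mul_of_nonneg_left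
        (ContinuousLinearMap.norm_apply_ringInverse_le
          (fun y => hP.inner_apply_self_nonneg one_pos y) hα hu v) (norm_nonneg _))
    _ ≤ (b ^ (ν - 1) * ‖g‖) ^ 2 := by
        rw [← sq]; gcongr; exact hP.norm_apply_ringInverse_le_rpow hα hu hν g

theorem inner_ringInverse_eq (hP : IsSelfAdjointSemigroup P b) (hu : IsUnit (P 1 + α • 1))
    {ν : ℝ} (hν : 0 < ν) (g : K) :
    ⟪P ν (𝓡 g), P 1 (𝓡 (P ν (𝓡 g)))⟫ =
      ⟪𝓡 (𝓡 g), P (2 * ν + 2) (𝓡 (𝓡 g))⟫ + α * ⟪𝓡 (𝓡 g), P (2 * ν + 1) (𝓡 (𝓡 g))⟫ := by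
  set w := 𝓡 (𝓡 g)
  have hTEv : P 1 (𝓡 (P ν (𝓡 g))) = P (1 + ν) w := by
    rw [hP.ringInverse_apply_apply hν, ← hP.apply_add one_pos hν]
  rw [hTEv, ← ContinuousLinearMap.apply_ringInverse_add_smul_one hu (𝓡 g), real_inner_comm,
    hP.inner_apply_apply_add_smul (by positivity) hν,
    show 1 + ν + ν + 1 = 2 * ν + 2 by ring, show 1 + ν + ν = 2 * ν + 1 by ring]

theorem weightedMoment_zero_le (hP : IsSelfAdjointSemigroup P b) (hα : 0 ≤ α)
    (hu : IsUnit (P 1 + α • 1)) (g : K) : weightedMoment P α 2 (𝓡 (𝓡 g)) 0 ≤ ‖g‖ ^ 2 := by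
  have hT : ∀ y, 0 ≤ ⟪y, P 1 y⟫ := fun y => hP.inner_apply_self_nonneg one_pos y
  have h := hP.inner_apply_apply_add_smul one_pos one_pos α (𝓡 (𝓡 g))
  rw [ContinuousLinearMap.apply_ringInverse_add_smul_one hu (𝓡 g)] at h
  norm_num [weightedMoment] at h ⊢
  rw [← h]
  calc α * ⟪P 1 (𝓡 (𝓡 g)), P 1 (𝓡 g)⟫ ≤ α * (‖𝓡 g‖ * ‖g‖) := by
        gcongr
        exact (real_inner_le_norm _ _).trans (mul_le_mul
          (ContinuousLinearMap.norm_apply_ringInverse_le hT hα hu _)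
          (ContinuousLinearMap.norm_apply_ringInverse_le hT hα hu _)
          (norm_nonneg _) (norm_nonneg _))
    _ ≤ ‖g‖ * ‖g‖ := by
        rw [← mul_assoc]; gcongr
        exact ContinuousLinearMap.mul_norm_ringInverse_le hT hα hu _
    _ = ‖g‖ ^ 2 := by ring

theorem weightedMoment_one_le (hP : IsSelfAdjointSemigroup P b) (hα : 0 ≤ α)
    (hu : IsUnit (P 1 + α • 1)) (g : K) : weightedMoment P α 2 (𝓡 (𝓡 g)) 1 ≤ ‖g‖ ^ 2 := by
  have hT : ∀ y, 0 ≤ ⟪y, P 1 y⟫ := fun y => hP.inner_apply_self_nonneg one_pos y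
  have h := hP.inner_apply_apply_add_smul two_pos one_pos α (𝓡 (𝓡 g))
  rw [ContinuousLinearMap.apply_ringInverse_add_smul_one hu (𝓡 g)] at h
  norm_num [weightedMoment] at h ⊢
  rw [← h, ← one_add_one_eq_two, hP.apply_add one_pos one_pos,
    ← hP.ringInverse_apply_apply one_pos]
  calc _ ≤ ‖P 1 (𝓡 (P 1 (𝓡 g)))‖ * ‖P 1 (𝓡 g)‖ := real_inner_le_norm _ _
    _ ≤ ‖g‖ * ‖g‖ := by
        gcongr
        · exact (ContinuousLinearMap.norm_apply_ringInverse_le hT hα hu _).trans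
            (ContinuousLinearMap.norm_apply_ringInverse_le hT hα hu _)
        · exact ContinuousLinearMap.norm_apply_ringInverse_le hT hα hu _
    _ = ‖g‖ ^ 2 := by ring

theorem sq_mul_inner_ringInverse_le_of_le_one (hP : IsSelfAdjointSemigroup P b) (hb : 0 < b)
    (hα : 0 < α) (hu : IsUnit (P 1 + α • 1)) {ν : ℝ} (hν : 1 / 2 ≤ ν) (hν1 : ν ≤ 1) (g : K) :
    α ^ 2 * ⟪P ν (𝓡 g), P 1 (𝓡 (P ν (𝓡 g)))⟫ ≤ (α ^ ν * ‖g‖) ^ 2 := by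
  have h := hP.weightedMoment_le hb hα two_pos _ (hP.weightedMoment_zero_le hα.le hu g)
    (hP.weightedMoment_one_le hα.le hu g) (θ := 2 * ν - 1) ⟨by linarith, by linarith⟩
  rw [weightedMoment, show 2 + 1 + (2 * ν - 1) = 2 * ν + 2 by ring,
    show 2 + (2 * ν - 1) = 2 * ν + 1 by ring, ← hP.inner_ringInverse_eq hu (by linarith)] at h
  have hα2 : α ^ 2 = α ^ (2 * ν) * α ^ (1 - (2 * ν - 1)) := by
    rw [← Real.rpow_add hα, show 2 * ν + (1 - (2 * ν - 1)) = 2 by ring, Real.rpow_two]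
  rw [hα2, mul_assoc, mul_pow, ← Real.rpow_mul_natCast hα.le, Nat.cast_two, mul_comm ν 2]
  gcongr

end IsSelfAdjointSemigroup

end Semigroup

/-- `Tpow a` stands for `T_π ^ a` and `Sinv` for `(C_π + α·Id)^{-1/2}`. -/
theorem regularized_residual_bound_general
    {X : Type} [MeasurableSpace X] (μX : Measure X)
    {H : Type} [NormedAddCommGroup H] [InnerProductSpace ℝ H] [CompleteSpace H]
    (κ : ℝ) (hκ : 0 < κ)
    (Iemb : H →L[ℝ] Lp ℝ 2 μX)
    (Tpow : ℝ → (Lp ℝ 2 μX →L[ℝ] Lp ℝ 2 μX))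
    (hT1 : Tpow 1 = Iemb.comp (ContinuousLinearMap.adjoint Iemb))
    (hTadd : ∀ a b : ℝ, 0 < a → 0 < b → Tpow (a + b) = (Tpow a).comp (Tpow b))
    (hTsa : ∀ a : ℝ, 0 < a → IsSelfAdjoint (Tpow a))
    (hTnorm : ∀ a : ℝ, 0 < a → ‖Tpow a‖ ≤ (κ ^ 2) ^ a)
    (fstar : X → ℝ) (hfmem : MemLp fstar 2 μX)
    (ν R : ℝ) (hν : 1 / 2 ≤ ν)
    (hSRC : ∃ g : Lp ℝ 2 μX, ‖g‖ ≤ R ∧ hfmem.toLp fstar = Tpow ν g)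
    (α : ℝ) (hα : 0 < α)
    (Sinv : H →L[ℝ] H) (hSsa : IsSelfAdjoint Sinv)
    (hSsq : (Sinv * Sinv) *
      ((ContinuousLinearMap.adjoint Iemb).comp Iemb + α • (1 : H →L[ℝ] H)) = 1) :
    ‖Sinv (ContinuousLinearMap.adjoint Iemb (hfmem.toLp fstar) -
        ((ContinuousLinearMap.adjoint Iemb).comp Iemb)
          (Ring.inverse ((ContinuousLinearMap.adjoint Iemb).comp Iemb + α • (1 : H →L[ℝ] H))
            (ContinuousLinearMap.adjoint Iemb (hfmem.toLp fstar))))‖ ≤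
      R * max 1 (κ ^ (2 * (ν - 1))) * α ^ min ν 1 := by
  obtain ⟨g, hgR, hfg⟩ := hSRC
  have hP : IsSelfAdjointSemigroup Tpow (κ ^ 2) := ⟨hTadd, hTsa, hTnorm⟩
  have hC : IsSelfAdjoint (ContinuousLinearMap.adjoint Iemb ∘L Iemb + α • 1) :=
    (ContinuousLinearMap.isPositive_adjoint_comp_self Iemb).isSelfAdjoint.add
      ((IsSelfAdjoint.all α).smul (IsSelfAdjoint.one _))
  have hSS : IsSelfAdjoint (Sinv * Sinv) := by
    simpa only [hSsa.star_eq] using IsSelfAdjoint.star_mul_self Sinv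
  have hCu := hC.isUnit_of_mul_eq_one hSS hSsq
  have hTu : IsUnit (Tpow 1 + α • 1) :=
    hT1 ▸ ContinuousLinearMap.isUnit_comp_add_smul_one_swap hα.ne' hCu
  have hL := ContinuousLinearMap.norm_sq_apply_ringInverse_adjoint hSsa hCu (hT1 ▸ hTu)
    (hC.ringInverse_eq_of_mul_eq_one hSS hSsq) (Tpow ν g)
  rw [← hT1, hP.ringInverse_apply_apply (by linarith)] at hL
  rw [hfg, ContinuousLinearMap.sub_apply_ringInverse_add_smul_one hCu, map_smul, norm_smul,
    Real.norm_of_nonneg hα.le]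
  have hR : 0 ≤ R := (norm_nonneg g).trans hgR
  rcases le_total ν 1 with hν1 | hν1
  · have h := hP.sq_mul_inner_ringInverse_le_of_le_one (by positivity) hα hTu hν hν1 g
    rw [← hL, ← mul_pow, pow_le_pow_iff_left₀ (by positivity) (by positivity) two_ne_zero] at h
    calc _ ≤ α ^ ν * ‖g‖ := h
      _ ≤ α ^ ν * (R * max 1 (κ ^ (2 * (ν - 1)))) := by
          gcongr; exact hgR.trans (le_mul_of_one_le_right hR (le_max_left _ _))
      _ = _ := by rw [min_eq_left hν1]; ring
  · have h := hP.inner_ringInverse_le_of_one_le hα.le hTu hν1 g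
    rw [← hL, pow_le_pow_iff_left₀ (by positivity) (by positivity) two_ne_zero,
      ← Real.rpow_natCast, ← Real.rpow_mul hκ.le, Nat.cast_two] at h
    calc _ ≤ α * (κ ^ (2 * (ν - 1)) * ‖g‖) := by gcongr
      _ ≤ α * (max 1 (κ ^ (2 * (ν - 1))) * R) := by gcongr; exact le_max_right _ _
      _ = _ := by rw [min_eq_right hν1, Real.rpow_one]; ring

/-- regularized residual bound: under the kernel boundedness assumption
and (SRC) with `ν ≥ 1/2`, for every `α > 0`,
`‖(C_π + α·Id)^{−1/2}·(I_π^* f⋆ − C_π f_α)‖_H ≤ R·max{1, κ^{2(ν−1)}}·α^{min{ν,1}}`,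
where `f_α = (C_π + α·Id)⁻¹ I_π^* f⋆`.  The operator `Sinv = (C_π + α·Id)^{−1/2}` is
characterized as the (unique) positive selfadjoint operator whose square is the inverse
of `C_π + α·Id`. -/
theorem regularized_residual_bound
    {X : Type} [MeasurableSpace X] (μX : Measure X) [IsProbabilityMeasure μX]
    {H : Type} [NormedAddCommGroup H] [InnerProductSpace ℝ H] [CompleteSpace H]
    (φ : X → H) (κ : ℝ) (hκ : 0 < κ) (hφbdd : ∀ᵐ x ∂μX, ‖φ x‖ ≤ κ)
    (Iemb : H →L[ℝ] Lp ℝ 2 μX)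
    (hIemb : ∀ f : H, (Iemb f : X → ℝ) =ᵐ[μX] fun x => inner (𝕜 := ℝ) (φ x) f)
    (Tpow : ℝ → (Lp ℝ 2 μX →L[ℝ] Lp ℝ 2 μX))
    (hT1 : Tpow 1 = Iemb.comp (ContinuousLinearMap.adjoint Iemb))
    (hTadd : ∀ a b : ℝ, 0 < a → 0 < b → Tpow (a + b) = (Tpow a).comp (Tpow b))
    (hTsa : ∀ a : ℝ, 0 < a → IsSelfAdjoint (Tpow a))
    (hTpos : ∀ a : ℝ, 0 < a → ∀ g : Lp ℝ 2 μX, 0 ≤ inner (𝕜 := ℝ) g (Tpow a g))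
    (hTnorm : ∀ a : ℝ, 0 < a → ‖Tpow a‖ ≤ (κ ^ 2) ^ a)
    (fstar : X → ℝ) (hfmem : MemLp fstar 2 μX)
    (ν R : ℝ) (hν : 1 / 2 ≤ ν) (hR : 0 < R)
    (hSRC : ∃ g : Lp ℝ 2 μX, ‖g‖ ≤ R ∧ hfmem.toLp fstar = Tpow ν g)
    (α : ℝ) (hα : 0 < α)
    (Sinv : H →L[ℝ] H) (hSsa : IsSelfAdjoint Sinv)
    (hSpos : ∀ f : H, 0 ≤ inner (𝕜 := ℝ) f (Sinv f))
    (hSsq : (Sinv * Sinv) *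
      ((ContinuousLinearMap.adjoint Iemb).comp Iemb + α • (1 : H →L[ℝ] H)) = 1) :
    ‖Sinv (ContinuousLinearMap.adjoint Iemb (hfmem.toLp fstar) -
        ((ContinuousLinearMap.adjoint Iemb).comp Iemb)
          (Ring.inverse ((ContinuousLinearMap.adjoint Iemb).comp Iemb + α • (1 : H →L[ℝ] H))
            (ContinuousLinearMap.adjoint Iemb (hfmem.toLp fstar))))‖ ≤
      R * max 1 (κ ^ (2 * (ν - 1))) * α ^ min ν 1 :=
  regularized_residual_bound_general μX κ hκ Iemb Tpow hT1 hTadd hTsa hTnorm fstar hfmem ν R hν hSRC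
    α hα Sinv hSsa hSsq
end
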